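/- Let T = (T_1, …, T_N) with X := T_1 and N ≥ 1. Let μ = P + V_0(T) + Σ_{i≥1} V_i(T) P^{−i} be a Laurent series in P^{−1} with smooth coefficients, and let M := Σ_{n=1}^{N} n T_n μ^{n−1} + Σ_{i≥1} S_i(T) μ^{−i} with smooth functions S_i. Then {μ, M} − 1 contains only strictly negative powers of P, i.e. ({μ, M} − 1)_{≥0} = 0. -/

import Mathlib

namespace DMKP

/-- Coefficient functions of a formal Laurent series in `P⁻¹` with time variables
`T = (T₁, …, T_N)`: `A n` is the coefficient of `P^n`. -/
abbrev Coeffs (N : ℕ) := ℤ → (Fin N → ℝ) → ℝ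

variable {N : ℕ}

/-- Partial derivative in the direction of the `q`-th time variable. -/
noncomputable def pd (q : Fin N) (f : (Fin N → ℝ) → ℝ) : (Fin N → ℝ) → ℝ :=
  fun x => fderiv ℝ f x (Pi.single q 1)

/-- Finitely many positive powers of `P`. -/
def BddPow (A : Coeffs N) : Prop := ∃ m : ℤ, ∀ n : ℤ, m < n → A n = 0

/-- All coefficients are smooth functions of the time variables. -/
def SmoothCoeffs (A : Coeffs N) : Prop := ∀ n : ℤ, ContDiff ℝ (⊤ : ℕ∞) (A n)

/-- A Laurent series in `P⁻¹` with smooth coefficients. -/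
def IsLaurent (A : Coeffs N) : Prop := BddPow A ∧ SmoothCoeffs A

/-- Termwise `∂_P`. -/
def dP (A : Coeffs N) : Coeffs N := fun n x => ((n + 1 : ℤ) : ℝ) * A (n + 1) x

/-- Termwise `∂_{T_q}`. -/
noncomputable def dT (q : Fin N) (A : Coeffs N) : Coeffs N := fun n => pd q (A n)

/-- Termwise `∂_X`, where `X = T₁`. -/
noncomputable def dX [NeZero N] (A : Coeffs N) : Coeffs N := dT 0 A

/-- Termwise product of Laurent series. -/
noncomputable def mul (A B : Coeffs N) : Coeffs N := fun n x => ∑' i : ℤ, A i x * B (n - i) x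

/-- The Poisson bracket `{f,g} = f_P g_X - f_X g_P`. -/
noncomputable def pb [NeZero N] (A B : Coeffs N) : Coeffs N :=
  fun n x => mul (dP A) (dX B) n x - mul (dX A) (dP B) n x

/-- Truncation keeping only powers `P^n` with `n ≥ k`. -/
def truncGe (k : ℤ) (A : Coeffs N) : Coeffs N := fun n => if k ≤ n then A n else 0

/-- Truncation keeping only powers `P^n` with `n ≤ k`. -/
def truncLe (k : ℤ) (A : Coeffs N) : Coeffs N := fun n => if n ≤ k then A n else 0

/-- The residue: coefficient of `P⁻¹`. -/
def res (A : Coeffs N) : (Fin N → ℝ) → ℝ := A (-1)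

/-- The constant Laurent series `1`. -/
def one' : Coeffs N := fun n => if n = 0 then (fun _ => (1 : ℝ)) else 0

/-- `powC A q` is the `q`-th power `A^q`. -/
noncomputable def powC (A : Coeffs N) : ℕ → Coeffs N
  | 0 => one'
  | q + 1 => mul A (powC A q)

/-- `e^{-ad φ} A = Σ_{k≥0} (1/k!) (φ_X)^k ∂_P^k A`. -/
noncomputable def expAdNeg [NeZero N] (φ : (Fin N → ℝ) → ℝ) (A : Coeffs N) : Coeffs N :=
  fun n x => ∑' k : ℕ, (pd 0 φ x) ^ k / (Nat.factorial k : ℝ) * (dP^[k] A) n x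

/-- `e^{ad φ} A = Σ_{k≥0} (1/k!) (-φ_X)^k ∂_P^k A`. -/
noncomputable def expAdPos [NeZero N] (φ : (Fin N → ℝ) → ℝ) (A : Coeffs N) : Coeffs N :=
  fun n x => ∑' k : ℕ, (-(pd 0 φ x)) ^ k / (Nat.factorial k : ℝ) * (dP^[k] A) n x

/-- A `P`-independent function viewed as a Laurent series concentrated at `P^0`. -/
def const (φ : (Fin N → ℝ) → ℝ) : Coeffs N := fun n => if n = 0 then φ else 0

/-- Evaluation of the polynomial (non-negative) part of `A` at `P = φ_X`. -/
noncomputable def evalAtPhiX [NeZero N] (A : Coeffs N) (φ : (Fin N → ℝ) → ℝ) :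
    (Fin N → ℝ) → ℝ :=
  fun x => ∑' k : ℕ, A (k : ℤ) x * (pd 0 φ x) ^ k

/-- The shape `λ = P + U₂ P⁻¹ + U₃ P⁻² + ⋯` of the dKP Lax function. -/
def IsDKPShape (lam : Coeffs N) : Prop :=
  (lam 1 = fun _ => (1 : ℝ)) ∧ lam 0 = 0 ∧ ∀ n : ℤ, 2 ≤ n → lam n = 0

/-- The shape `μ = P + V₀ + V₁ P⁻¹ + ⋯` of the dmKP Lax function. -/
def IsDMKPShape (mu : Coeffs N) : Prop :=
  (mu 1 = fun _ => (1 : ℝ)) ∧ ∀ n : ℤ, 2 ≤ n → mu n = 0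


/-- `μ^j` for `j : ℤ`, given an inverse `μ⁻¹`. -/
noncomputable def zpowPair {N : ℕ} (mu muinv : Coeffs N) (j : ℤ) : Coeffs N :=
  if 0 ≤ j then powC mu j.toNat else powC muinv (-j).toNat

/-- The Orlov function `M = Σ_{n=1}^N n T_n μ^{n-1} + Σ_{i≥1} S_i μ^{-i}` of dmKP. -/
noncomputable def orlov {N : ℕ} (mu muinv : Coeffs N) (S : ℕ → (Fin N → ℝ) → ℝ) :
    Coeffs N :=
  fun n x => (∑ q : Fin N, (((q : ℕ) + 1 : ℕ) : ℝ) * x q * powC mu (q : ℕ) n x)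
    + ∑' i : ℕ, S (i + 1) x * powC muinv (i + 1) n x

/-! ### Basic calculus lemmas for `pd` -/

lemma pd_zero (q : Fin N) : pd q (0 : (Fin N → ℝ) → ℝ) = 0 := by
  funext x
  show fderiv ℝ (fun _ => (0:ℝ)) x (Pi.single q 1) = 0
  simp

lemma pd_zero' (q : Fin N) (x : Fin N → ℝ) : pd q (fun _ => (0:ℝ)) x = 0 := by
  have := congrFun (pd_zero (N := N) q) x
  simpa [Pi.zero_def] using this

lemma pd_const (q : Fin N) (c : ℝ) (x : Fin N → ℝ) : pd q (fun _ => c) x = 0 := by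
  simp [pd, fderiv_const]

lemma pd_add (q : Fin N) {f g : (Fin N → ℝ) → ℝ} (x : Fin N → ℝ)
    (hf : DifferentiableAt ℝ f x) (hg : DifferentiableAt ℝ g x) :
    pd q (fun y => f y + g y) x = pd q f x + pd q g x := by
  simp [pd, fderiv_fun_add hf hg]

lemma pd_mul (q : Fin N) {f g : (Fin N → ℝ) → ℝ} (x : Fin N → ℝ)
    (hf : DifferentiableAt ℝ f x) (hg : DifferentiableAt ℝ g x) :
    pd q (fun y => f y * g y) x = pd q f x * g x + f x * pd q g x := by
  simp [pd, fderiv_fun_mul hf hg]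
  ring

lemma pd_finsum {ι : Type*} (q : Fin N) (s : Finset ι) (f : ι → (Fin N → ℝ) → ℝ)
    (x : Fin N → ℝ) (hf : ∀ i ∈ s, DifferentiableAt ℝ (f i) x) :
    pd q (fun y => ∑ i ∈ s, f i y) x = ∑ i ∈ s, pd q (f i) x := by
  classical
  induction s using Finset.induction with
  | empty => simpa using pd_const q 0 x
  | insert a s hnot ih =>
      rw [Finset.sum_insert hnot]
      have h1 : DifferentiableAt ℝ (f a) x := hf a (Finset.mem_insert_self a s)
      have h2 : DifferentiableAt ℝ (fun y => ∑ i ∈ s, f i y) x := by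
        apply DifferentiableAt.fun_sum
        intro i hi; exact hf i (Finset.mem_insert_of_mem hi)
      have e1 : (fun y => ∑ i ∈ insert a s, f i y)
          = fun y => f a y + (fun z => ∑ i ∈ s, f i z) y := by
        funext y; rw [Finset.sum_insert hnot]
      rw [e1, pd_add q x h1 h2, ih (fun i hi => hf i (Finset.mem_insert_of_mem hi))]

lemma pd_coord (q j : Fin N) (x : Fin N → ℝ) :
    pd q (fun y => y j) x = if q = j then 1 else 0 := by
  have : fderiv ℝ (fun y : Fin N → ℝ => y j) x
      = (ContinuousLinearMap.proj j : (Fin N → ℝ) →L[ℝ] ℝ) :=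
    (ContinuousLinearMap.proj j : (Fin N → ℝ) →L[ℝ] ℝ).fderiv
  simp only [pd, this, ContinuousLinearMap.proj_apply]
  by_cases h : q = j <;> simp [h, Pi.single_apply]

lemma pd_smooth (q : Fin N) {f : (Fin N → ℝ) → ℝ} (hf : ContDiff ℝ (⊤ : ℕ∞) f) :
    ContDiff ℝ (⊤ : ℕ∞) (pd q f) := by
  have h1 : ContDiff ℝ (⊤ : ℕ∞) (fderiv ℝ f) := hf.fderiv_right (by simp)
  exact h1.clm_apply contDiff_const

/-! ### Degree bounds -/

/-- `A` has only powers `P^n` with `n ≤ m`. -/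
def degLe (A : Coeffs N) (m : ℤ) : Prop := ∀ n : ℤ, m < n → A n = 0

lemma degLe_dT (q : Fin N) {A : Coeffs N} {m : ℤ} (hA : degLe A m) :
    degLe (dT q A) m := by
  intro n hn
  have : A n = 0 := hA n hn
  simp [dT, this, pd_zero]

lemma degLe_dP {A : Coeffs N} {m : ℤ} (hA : degLe A m) : degLe (dP A) (m - 1) := by
  intro n hn
  have : A (n + 1) = 0 := hA (n + 1) (by omega)
  funext x
  simp [dP, this]

lemma degLe_mono {A : Coeffs N} {m m' : ℤ} (h : m ≤ m') (hA : degLe A m) : degLe A m' :=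
  fun n hn => hA n (by omega)

/-! ### Multiplication -/

lemma mul_eq_sum {A B : Coeffs N} {a b : ℤ} (hA : degLe A a) (hB : degLe B b)
    (n : ℤ) (x : Fin N → ℝ) (s : Finset ℤ) (hs : Finset.Icc (n - b) a ⊆ s) :
    mul A B n x = ∑ i ∈ s, A i x * B (n - i) x := by
  apply tsum_eq_sum
  intro i hi
  have hi' : i ∉ Finset.Icc (n - b) a := fun h => hi (hs h)
  rw [Finset.mem_Icc] at hi'
  push_neg at hi'
  by_cases h : i ≤ a
  · have : B (n - i) = 0 := hB _ (by omega)
    simp [this]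
  · have : A i = 0 := hA _ (by omega)
    simp [this]

lemma degLe_mul {A B : Coeffs N} {a b : ℤ} (hA : degLe A a) (hB : degLe B b) :
    degLe (mul A B) (a + b) := by
  intro n hn
  funext x
  have : ∀ i : ℤ, A i x * B (n - i) x = 0 := by
    intro i
    by_cases h : i ≤ a
    · have : B (n - i) = 0 := hB _ (by omega)
      simp [this]
    · have : A i = 0 := hA _ (by omega)
      simp [this]
  simp only [mul]
  rw [tsum_congr this]
  simp

lemma mul_comm' (A B : Coeffs N) : mul A B = mul B A := by
  funext n x
  show ∑' i : ℤ, A i x * B (n - i) x = ∑' i : ℤ, B i x * A (n - i) x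
  rw [← Equiv.tsum_eq (Equiv.subLeft n) (fun i => A i x * B (n - i) x)]
  apply tsum_congr
  intro i
  have h1 : n - (n - i) = i := by ring
  simp only [Equiv.subLeft_apply, h1]
  ring

lemma one'_mul (A : Coeffs N) : mul one' A = A := by
  funext n x
  show ∑' i : ℤ, one' i x * A (n - i) x = A n x
  rw [tsum_eq_sum (s := {0}) (by
    intro i hi
    have : i ≠ 0 := by simpa using hi
    simp [one', this])]
  simp [one']

lemma mul_one' (A : Coeffs N) : mul A one' = A := by
  rw [mul_comm', one'_mul]

lemma smooth_mul {A B : Coeffs N} {a b : ℤ} (hA : degLe A a) (hB : degLe B b)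
    (hAs : SmoothCoeffs A) (hBs : SmoothCoeffs B) : SmoothCoeffs (mul A B) := by
  intro n
  have : mul A B n = fun x => ∑ i ∈ Finset.Icc (n - b) a, A i x * B (n - i) x := by
    funext x
    exact mul_eq_sum hA hB n x _ (subset_refl _)
  rw [this]
  apply ContDiff.sum
  intro i _
  exact (hAs i).mul (hBs (n - i))
lemma mul_assoc' {A B C : Coeffs N} {a b c : ℤ} (hA : degLe A a) (hB : degLe B b)
    (hC : degLe C c) : mul (mul A B) C = mul A (mul B C) := by
  funext n x
  set s : Finset ℤ := Finset.Icc (n - c) (a + b) with hs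
  set t : Finset ℤ := Finset.Icc (n - b - c) a with ht
  have hBC : degLe (mul B C) (b + c) := degLe_mul hB hC
  have hAB : degLe (mul A B) (a + b) := degLe_mul hA hB
  have left : mul (mul A B) C n x = ∑ i ∈ s, (mul A B) i x * C (n - i) x :=
    mul_eq_sum hAB hC n x s (subset_refl _)
  have right : mul A (mul B C) n x = ∑ j ∈ t, A j x * (mul B C) (n - j) x :=
    mul_eq_sum hA hBC n x t (by
      rw [ht]
      apply Finset.Icc_subset_Icc _ le_rfl
      omega)
  rw [left, right]
  have inner : ∀ j ∈ t, A j x * (mul B C) (n - j) x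
      = ∑ i ∈ s, A j x * (B (i - j) x * C (n - i) x) := by
    intro j hj
    rw [ht, Finset.mem_Icc] at hj
    have e1 : (mul B C) (n - j) x = ∑' k : ℤ, B k x * C (n - j - k) x := rfl
    have e2 : ∑' k : ℤ, B k x * C (n - j - k) x
        = ∑' i : ℤ, B (i - j) x * C (n - i) x := by
      rw [← Equiv.tsum_eq (Equiv.addRight j) (fun i => B (i - j) x * C (n - i) x)]
      apply tsum_congr
      intro k
      simp only [Equiv.coe_addRight, add_sub_cancel_right]
      have : n - (k + j) = n - j - k := by ring
      rw [this]
    have e3 : ∑' i : ℤ, B (i - j) x * C (n - i) x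
        = ∑ i ∈ s, B (i - j) x * C (n - i) x := by
      apply tsum_eq_sum
      intro i hi
      rw [hs, Finset.mem_Icc] at hi
      push_neg at hi
      by_cases h : i ≤ a + b
      · have : C (n - i) = 0 := hC _ (by omega)
        simp [this]
      · have : B (i - j) = 0 := hB _ (by omega)
        simp [this]
    rw [e1, e2, e3, Finset.mul_sum]
  rw [Finset.sum_congr rfl inner, Finset.sum_comm]
  apply Finset.sum_congr rfl
  intro i hi
  rw [hs, Finset.mem_Icc] at hi
  have e4 : (mul A B) i x = ∑ j ∈ t, A j x * B (i - j) x := by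
    apply mul_eq_sum hA hB i x t
    rw [ht]
    apply Finset.Icc_subset_Icc _ le_rfl
    omega
  rw [e4, Finset.sum_mul]
  apply Finset.sum_congr rfl
  intro j _
  ring

/-- scalar functions (in `x`) pull out of `mul` in the second argument. -/
lemma mul_smul_fn (A B : Coeffs N) (c : (Fin N → ℝ) → ℝ) (n : ℤ) (x : Fin N → ℝ) :
    mul A (fun m y => c y * B m y) n x = c x * mul A B n x := by
  show ∑' i : ℤ, A i x * (c x * B (n - i) x) = c x * ∑' i : ℤ, A i x * B (n - i) x
  rw [← tsum_mul_left]
  apply tsum_congr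
  intro i
  ring

lemma mul_neg_fn (A B : Coeffs N) (n : ℤ) (x : Fin N → ℝ) :
    mul A (fun m y => -(B m y)) n x = -(mul A B n x) := by
  show ∑' i : ℤ, A i x * (-(B (n - i) x)) = -∑' i : ℤ, A i x * B (n - i) x
  rw [← tsum_neg]
  apply tsum_congr
  intro i
  ring

/-- `∂_P` is a derivation for `mul`. -/
lemma dP_mul {A B : Coeffs N} {a b : ℤ} (hA : degLe A a) (hB : degLe B b) :
    dP (mul A B) = fun n x => mul (dP A) B n x + mul A (dP B) n x := by
  funext n x
  set s : Finset ℤ := Finset.Icc (n - b) (a + 1) with hs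
  have e1 : dP (mul A B) n x = ∑ i ∈ s, ((n + 1 : ℤ) : ℝ) * (A i x * B (n + 1 - i) x) := by
    show ((n + 1 : ℤ) : ℝ) * mul A B (n+1) x = _
    rw [mul_eq_sum hA hB (n+1) x s (by rw [hs]; apply Finset.Icc_subset_Icc <;> omega),
      Finset.mul_sum]
  have e2 : mul (dP A) B n x = ∑ i ∈ s, ((i + 1 : ℤ) : ℝ) * A (i + 1) x * B (n - i) x := by
    have hdA : degLe (dP A) (a - 1) := degLe_dP hA
    rw [mul_eq_sum hdA hB n x s (by rw [hs]; apply Finset.Icc_subset_Icc <;> omega)]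
    rfl
  have e3 : mul A (dP B) n x
      = ∑ i ∈ s, A i x * (((n - i + 1 : ℤ) : ℝ) * B (n - i + 1) x) := by
    have hdB : degLe (dP B) (b - 1) := degLe_dP hB
    rw [mul_eq_sum hA hdB n x s (by rw [hs]; apply Finset.Icc_subset_Icc <;> omega)]
    rfl
  rw [e1, e2, e3]
  -- shift the first sum on the RHS
  have shift : ∑ i ∈ s, ((i + 1 : ℤ) : ℝ) * A (i + 1) x * B (n - i) x
      = ∑ i ∈ s, (i : ℝ) * A i x * B (n + 1 - i) x := by
    rw [hs]
    set g : ℤ → ℝ := fun i => (i : ℝ) * A i x * B (n + 1 - i) x with hgdef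
    have h1 : ∑ i ∈ Finset.Icc (n - b) (a + 1), ((i + 1 : ℤ) : ℝ) * A (i + 1) x * B (n - i) x
        = ∑ i ∈ Finset.Icc (n - b) (a + 1), g (i + 1) := by
      apply Finset.sum_congr rfl
      intro i _
      have e : n + 1 - (i + 1) = n - i := by ring
      simp only [hgdef, e]
    have himg : Finset.Icc (n - b + 1) (a + 2) = Finset.map
        ⟨fun i => i + 1, fun p q h => by simpa using h⟩ (Finset.Icc (n - b) (a + 1)) := by
      ext k
      simp only [Finset.mem_map, Finset.mem_Icc, Function.Embedding.coeFn_mk]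
      constructor
      · intro h; exact ⟨k - 1, by omega, by show k - 1 + 1 = k; omega⟩
      · rintro ⟨m, hm, rfl⟩; show n - b + 1 ≤ m + 1 ∧ m + 1 ≤ a + 2; omega
    have h2 : ∑ i ∈ Finset.Icc (n - b) (a + 1), g (i + 1)
        = ∑ i ∈ Finset.Icc (n - b + 1) (a + 2), g i := by
      rw [himg, Finset.sum_map]
      rfl
    have h3 : ∑ i ∈ Finset.Icc (n - b + 1) (a + 2), g i
        = ∑ i ∈ Finset.Icc (n - b) (a + 2), g i := by
      apply Finset.sum_subset (Finset.Icc_subset_Icc (by omega) le_rfl)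
      intro i hi hni
      rw [Finset.mem_Icc] at hi
      rw [Finset.mem_Icc] at hni
      push_neg at hni
      have hib : i = n - b := by omega
      have : B (n + 1 - i) = 0 := hB _ (by omega)
      simp [hgdef, this]
    have h4 : ∑ i ∈ Finset.Icc (n - b) (a + 1), g i
        = ∑ i ∈ Finset.Icc (n - b) (a + 2), g i := by
      apply Finset.sum_subset (Finset.Icc_subset_Icc le_rfl (by omega))
      intro i hi hni
      rw [Finset.mem_Icc] at hi
      rw [Finset.mem_Icc] at hni
      push_neg at hni
      have : A i = 0 := hA _ (by omega)
      simp [hgdef, this]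
    rw [h1, h2, h3, ← h4]
  rw [shift, ← Finset.sum_add_distrib]
  apply Finset.sum_congr rfl
  intro i hi
  have : ((n + 1 : ℤ) : ℝ) = (i : ℝ) + ((n - i + 1 : ℤ) : ℝ) := by
    push_cast; ring
  rw [this]
  push_cast
  ring
/-- Leibniz rule for `dT` on `mul`. -/
lemma dT_mul (q : Fin N) {A B : Coeffs N} {a b : ℤ} (hA : degLe A a) (hB : degLe B b)
    (hAs : SmoothCoeffs A) (hBs : SmoothCoeffs B) :
    dT q (mul A B) = fun n x => mul (dT q A) B n x + mul A (dT q B) n x := by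
  funext n x
  have e0 : mul A B n = fun y => ∑ i ∈ Finset.Icc (n - b) a, A i y * B (n - i) y := by
    funext y
    exact mul_eq_sum hA hB n y _ (subset_refl _)
  show pd q (mul A B n) x = _
  rw [e0, pd_finsum q _ (fun i y => A i y * B (n - i) y) x (fun i _ =>
    (((hAs i).differentiable (by simp)) x).mul (((hBs (n - i)).differentiable (by simp)) x))]
  have e1 : ∀ i ∈ Finset.Icc (n - b) a, pd q (fun y => A i y * B (n - i) y) x
      = pd q (A i) x * B (n - i) x + A i x * pd q (B (n - i)) x := fun i _ =>
    pd_mul q x (((hAs i).differentiable (by simp)) x) (((hBs (n - i)).differentiable (by simp)) x)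
  rw [Finset.sum_congr rfl e1, Finset.sum_add_distrib]
  congr 1
  · rw [mul_eq_sum (degLe_dT q hA) hB n x _ (subset_refl _)]
    rfl
  · rw [mul_eq_sum hA (degLe_dT q hB) n x _ (subset_refl _)]
    rfl

lemma degLe_one' : degLe (one' : Coeffs N) 0 := by
  intro n hn
  have h : ¬ n = 0 := by omega
  simp [one', h]

lemma smooth_one' : SmoothCoeffs (one' : Coeffs N) := by
  intro n
  by_cases h : n = 0 <;> simp [one', h] <;> exact contDiff_const

lemma degLe_powC {A : Coeffs N} {a : ℤ} (hA : degLe A a) (k : ℕ) :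
    degLe (powC A k) (k * a) := by
  induction k with
  | zero => simpa [powC] using degLe_one'
  | succ k ih =>
      have : ((k : ℤ) + 1) * a = a + k * a := by ring
      rw [powC]
      push_cast
      rw [this]
      exact degLe_mul hA ih

lemma smooth_powC {A : Coeffs N} {a : ℤ} (hA : degLe A a) (hAs : SmoothCoeffs A) (k : ℕ) :
    SmoothCoeffs (powC A k) := by
  induction k with
  | zero => exact smooth_one'
  | succ k ih => exact smooth_mul hA (degLe_powC hA k) hAs ih

lemma powC_add {A : Coeffs N} {a : ℤ} (hA : degLe A a) (i j : ℕ) :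
    mul (powC A i) (powC A j) = powC A (i + j) := by
  induction i with
  | zero => simpa [powC] using one'_mul (powC A j)
  | succ i ih =>
      have : powC A (i + 1) = mul A (powC A i) := rfl
      rw [this, mul_assoc' hA (degLe_powC hA i) (degLe_powC hA j), ih,
        show i + 1 + j = (i + j) + 1 from by omega]
      rfl

lemma dP_powC {A : Coeffs N} {a : ℤ} (hA : degLe A a) (k : ℕ) :
    dP (powC A (k + 1)) = fun n x => ((k : ℝ) + 1) * mul (powC A k) (dP A) n x := by
  induction k with
  | zero =>
      funext n x
      have h1 : powC A 1 = A := by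
        show mul A one' = A
        exact mul_one' A
      rw [h1]
      have h2 : mul (powC A 0) (dP A) = dP A := one'_mul (dP A)
      rw [h2]
      ring
  | succ k ih =>
      funext n x
      have h0 : powC A (k + 1 + 1) = mul A (powC A (k + 1)) := rfl
      rw [h0, dP_mul hA (degLe_powC hA (k + 1))]
      have h1 : mul A (dP (powC A (k + 1))) n x
          = ((k : ℝ) + 1) * mul A (mul (powC A k) (dP A)) n x := by
        rw [ih]
        exact mul_smul_fn A (mul (powC A k) (dP A)) (fun _ => ((k : ℝ) + 1)) n x
      have h2 : mul A (mul (powC A k) (dP A)) = mul (powC A (k + 1)) (dP A) := by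
        rw [← mul_assoc' hA (degLe_powC hA k) (degLe_dP hA)]
        rfl
      have h3 : mul (dP A) (powC A (k + 1)) = mul (powC A (k + 1)) (dP A) := mul_comm' _ _
      simp only [h1, h2, h3]
      push_cast
      ring

lemma dT_powC (q : Fin N) {A : Coeffs N} {a : ℤ} (hA : degLe A a) (hAs : SmoothCoeffs A)
    (k : ℕ) :
    dT q (powC A (k + 1)) = fun n x => ((k : ℝ) + 1) * mul (powC A k) (dT q A) n x := by
  induction k with
  | zero =>
      funext n x
      have h1 : powC A 1 = A := mul_one' A
      rw [h1]
      have h2 : mul (powC A 0) (dT q A) = dT q A := one'_mul (dT q A)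
      rw [h2]
      ring
  | succ k ih =>
      funext n x
      have h0 : powC A (k + 1 + 1) = mul A (powC A (k + 1)) := rfl
      rw [h0, dT_mul q hA (degLe_powC hA (k + 1)) hAs (smooth_powC hA hAs (k + 1))]
      have h1 : mul A (dT q (powC A (k + 1))) n x
          = ((k : ℝ) + 1) * mul A (mul (powC A k) (dT q A)) n x := by
        rw [ih]
        exact mul_smul_fn A (mul (powC A k) (dT q A)) (fun _ => ((k : ℝ) + 1)) n x
      have h2 : mul A (mul (powC A k) (dT q A)) = mul (powC A (k + 1)) (dT q A) := by
        rw [← mul_assoc' hA (degLe_powC hA k) (degLe_dT q hA)]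
        rfl
      have h3 : mul (dT q A) (powC A (k + 1)) = mul (powC A (k + 1)) (dT q A) := mul_comm' _ _
      simp only [h1, h2, h3]
      push_cast
      ring
lemma dT_one' (q : Fin N) : dT q (one' : Coeffs N) = fun _ _ => (0 : ℝ) := by
  funext n x
  show pd q (one' n) x = 0
  by_cases h : n = 0
  · subst h
    show pd q (fun _ => (1:ℝ)) x = 0
    exact pd_const q 1 x
  · simp only [one', if_neg h]
    exact pd_zero' q x

lemma dP_one' : dP (one' : Coeffs N) = fun _ _ => (0 : ℝ) := by
  funext n x
  show ((n + 1 : ℤ) : ℝ) * one' (n + 1) x = 0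
  by_cases h : n + 1 = 0
  · rw [h]; simp
  · simp [one', h]

lemma degLe_mu {mu : Coeffs N} (hshape : IsDMKPShape mu) : degLe mu 1 :=
  fun n hn => hshape.2 n (by omega)

section Inv

variable {mu muinv : Coeffs N} (hmu : IsLaurent mu) (hshape : IsDMKPShape mu)
  (hmuinv : IsLaurent muinv) (hinv : mul mu muinv = one') (hinv' : mul muinv mu = one')

include hshape hinv in
lemma muinv_zero_of_forall {n : ℤ} (hn : 0 ≤ n)
    (H : ∀ j : ℤ, n + 1 ≤ j → muinv j = 0) : muinv n = 0 := by
  funext x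
  have h0 : mul mu muinv (n + 1) x = one' (n + 1) x := by rw [hinv]
  have h1 : one' (n + 1) x = 0 := by
    simp [one', show ¬ (n + 1 = 0) by omega]
  have h2 : mul mu muinv (n + 1) x = muinv n x := by
    show ∑' i : ℤ, mu i x * muinv (n + 1 - i) x = muinv n x
    rw [tsum_eq_sum (s := {1}) (by
      intro i hi
      have hi1 : i ≠ 1 := by simpa using hi
      by_cases h : 2 ≤ i
      · rw [hshape.2 i h]; simp
      · rw [H (n + 1 - i) (by omega)]; simp)]
    simp [hshape.1]
  rw [h2, h1] at h0
  exact h0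

include hmuinv hshape hinv in
lemma degLe_muinv : degLe muinv (-1) := by
  obtain ⟨m, hm⟩ := hmuinv.1
  have key : ∀ d : ℕ, ∀ n : ℤ, 0 ≤ n → m - n ≤ d → muinv n = 0 := by
    intro d
    induction d with
    | zero =>
        intro n hn hd
        apply muinv_zero_of_forall hshape hinv hn
        intro j hj
        exact hm j (by omega)
    | succ d ih =>
        intro n hn hd
        apply muinv_zero_of_forall hshape hinv hn
        intro j hj
        exact ih j (by omega) (by omega)
  intro n hn
  exact key (m - n).toNat n (by omega) (by omega)

include hmu hshape hmuinv hinv hinv' in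
lemma dT_muinv (q : Fin N) :
    dT q muinv = fun n x => -(mul (powC muinv 2) (dT q mu) n x) := by
  have hdmu : degLe mu 1 := degLe_mu hshape
  have hdinv : degLe muinv (-1) := degLe_muinv hshape hmuinv hinv
  have step : (fun n x => mul (dT q mu) muinv n x + mul mu (dT q muinv) n x)
      = fun _ _ => (0 : ℝ) := by
    rw [← dT_mul q hdmu hdinv hmu.2 hmuinv.2, hinv, dT_one']
  have step2 : mul mu (dT q muinv) = fun n x => -(mul (dT q mu) muinv n x) := by
    funext n x
    have := congrFun (congrFun step n) x
    linarith
  have lhs : mul muinv (mul mu (dT q muinv))= dT q muinv := by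
    rw [← mul_assoc' hdinv hdmu (degLe_dT q hdinv), hinv', one'_mul]
  rw [← lhs, step2]
  funext n x
  rw [mul_neg_fn]
  have e1 : mul muinv (mul (dT q mu) muinv) = mul (powC muinv 2) (dT q mu) := by
    rw [mul_comm' (dT q mu) muinv, ← mul_assoc' hdinv hdinv (degLe_dT q hdmu)]
    have : powC muinv 2 = mul muinv muinv := by
      show mul muinv (mul muinv one') = mul muinv muinv
      rw [mul_one']
    rw [this]
  rw [e1]

include hmu hshape hmuinv hinv hinv' in
lemma dP_muinv :
    dP muinv = fun n x => -(mul (powC muinv 2) (dP mu) n x) := by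
  have hdmu : degLe mu 1 := degLe_mu hshape
  have hdinv : degLe muinv (-1) := degLe_muinv hshape hmuinv hinv
  have step : (fun n x => mul (dP mu) muinv n x + mul mu (dP muinv) n x)
      = fun _ _ => (0 : ℝ) := by
    rw [← dP_mul hdmu hdinv, hinv, dP_one']
  have step2 : mul mu (dP muinv) = fun n x => -(mul (dP mu) muinv n x) := by
    funext n x
    have := congrFun (congrFun step n) x
    linarith
  have lhs : mul muinv (mul mu (dP muinv)) = dP muinv := by
    rw [← mul_assoc' hdinv hdmu (degLe_dP hdinv), hinv', one'_mul]
  rw [← lhs, step2]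
  funext n x
  rw [mul_neg_fn]
  have e1 : mul muinv (mul (dP mu) muinv) = mul (powC muinv 2) (dP mu) := by
    rw [mul_comm' (dP mu) muinv, ← mul_assoc' hdinv hdinv (degLe_dP hdmu)]
    have : powC muinv 2 = mul muinv muinv := by
      show mul muinv (mul muinv one') = mul muinv muinv
      rw [mul_one']
    rw [this]
  rw [e1]

include hmu hshape hmuinv hinv hinv' in
lemma dT_powC_muinv (q : Fin N) (k : ℕ) :
    dT q (powC muinv (k + 1))
      = fun n x => -(((k : ℝ) + 1) * mul (powC muinv (k + 2)) (dT q mu) n x) := by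
  have hdmu : degLe mu 1 := degLe_mu hshape
  have hdinv : degLe muinv (-1) := degLe_muinv hshape hmuinv hinv
  rw [dT_powC q hdinv hmuinv.2 k, dT_muinv hmu hshape hmuinv hinv hinv' q]
  funext n x
  rw [mul_neg_fn]
  have e1 : mul (powC muinv k) (mul (powC muinv 2) (dT q mu))
      = mul (powC muinv (k + 2)) (dT q mu) := by
    rw [← mul_assoc' (degLe_powC hdinv k) (degLe_powC hdinv 2) (degLe_dT q hdmu),
      powC_add hdinv k 2]
  rw [e1]
  ring

include hmu hshape hmuinv hinv hinv' in
lemma dP_powC_muinv (k : ℕ) :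
    dP (powC muinv (k + 1))
      = fun n x => -(((k : ℝ) + 1) * mul (powC muinv (k + 2)) (dP mu) n x) := by
  have hdmu : degLe mu 1 := degLe_mu hshape
  have hdinv : degLe muinv (-1) := degLe_muinv hshape hmuinv hinv
  rw [dP_powC hdinv k, dP_muinv hmu hshape hmuinv hinv hinv']
  funext n x
  rw [mul_neg_fn]
  have e1 : mul (powC muinv k) (mul (powC muinv 2) (dP mu))
      = mul (powC muinv (k + 2)) (dP mu) := by
    rw [← mul_assoc' (degLe_powC hdinv k) (degLe_powC hdinv 2) (degLe_dP hdmu),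
      powC_add hdinv k 2]
  rw [e1]
  ring

end Inv
lemma dT_powC' (q : Fin N) {A : Coeffs N} {a : ℤ} (hA : degLe A a) (hAs : SmoothCoeffs A)
    (k : ℕ) : dT q (powC A k) = fun n x => (k : ℝ) * mul (powC A (k - 1)) (dT q A) n x := by
  cases k with
  | zero =>
      have h0 : powC A 0 = (one' : Coeffs N) := rfl
      rw [h0, dT_one' q]
      funext n x
      simp
  | succ k =>
      rw [dT_powC q hA hAs k]
      funext n x
      push_cast
      simp

lemma dP_powC' {A : Coeffs N} {a : ℤ} (hA : degLe A a) (k : ℕ) :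
    dP (powC A k) = fun n x => (k : ℝ) * mul (powC A (k - 1)) (dP A) n x := by
  cases k with
  | zero =>
      have h0 : powC A 0 = (one' : Coeffs N) := rfl
      rw [h0, dP_one']
      funext n x
      simp
  | succ k =>
      rw [dP_powC hA k]
      funext n x
      push_cast
      simp

lemma pd_const_mul (q : Fin N) (c : ℝ) {g : (Fin N → ℝ) → ℝ} (x : Fin N → ℝ)
    (hg : DifferentiableAt ℝ g x) :
    pd q (fun y => c * g y) x = c * pd q g x := by
  rw [show (fun y => c * g y) = fun y => (fun _ => c) y * g y from rfl,
    pd_mul q x (differentiableAt_const c) hg, pd_const]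
  ring

lemma degLe_smul_fn {B : Coeffs N} {d : ℤ} (hB : degLe B d) (c : (Fin N → ℝ) → ℝ) :
    degLe (fun m y => c y * B m y) d := by
  intro m hm
  funext y
  show c y * B m y = 0
  rw [hB m hm]
  simp

lemma degLe_finsum {ι : Type*} (s : Finset ι) {F : ι → Coeffs N} {d : ℤ}
    (hF : ∀ i ∈ s, degLe (F i) d) : degLe (fun m y => ∑ i ∈ s, F i m y) d := by
  intro m hm
  funext y
  show ∑ i ∈ s, F i m y = 0
  rw [Finset.sum_congr rfl (fun i hi => show F i m y = 0 from by rw [hF i hi m hm]; rfl)]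
  simp

lemma degLe_tsum_nat {F : ℕ → Coeffs N} {d : ℤ}
    (hF : ∀ i, degLe (F i) d) : degLe (fun m y => ∑' i : ℕ, F i m y) d := by
  intro m hm
  funext y
  have : ∀ i : ℕ, F i m y = 0 := fun i => by rw [hF i m hm]; rfl
  show ∑' i : ℕ, F i m y = 0
  rw [tsum_congr this]
  simp

lemma mul_add_fn {A B C : Coeffs N} {a b c : ℤ} (hA : degLe A a) (hB : degLe B b)
    (hC : degLe C c) (n : ℤ) (x : Fin N → ℝ) :
    mul A (fun m y => B m y + C m y) n x = mul A B n x + mul A C n x := by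
  show ∑' i : ℤ, A i x * (B (n - i) x + C (n - i) x) = _
  have e : ∀ i : ℤ, A i x * (B (n - i) x + C (n - i) x)
      = A i x * B (n - i) x + A i x * C (n - i) x := fun i => by ring
  rw [tsum_congr e]
  have sB : Summable (fun i : ℤ => A i x * B (n - i) x) := by
    apply summable_of_ne_finset_zero (s := Finset.Icc (n - b) a)
    intro i hi
    rw [Finset.mem_Icc] at hi
    push_neg at hi
    by_cases h : i ≤ a
    · rw [hB (n - i) (by omega)]; simp
    · rw [hA i (by omega)]; simp
  have sC : Summable (fun i : ℤ => A i x * C (n - i) x) := by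
    apply summable_of_ne_finset_zero (s := Finset.Icc (n - c) a)
    intro i hi
    rw [Finset.mem_Icc] at hi
    push_neg at hi
    by_cases h : i ≤ a
    · rw [hC (n - i) (by omega)]; simp
    · rw [hA i (by omega)]; simp
  exact Summable.tsum_add sB sC

/-- triple products commute outer-to-inner. -/
lemma symm3 {A B C : Coeffs N} {a b c : ℤ} (hA : degLe A a) (hB : degLe B b)
    (hC : degLe C c) : mul A (mul B C) = mul C (mul B A) := by
  rw [← mul_assoc' hA hB hC, mul_comm' (mul A B) C, mul_comm' A B]

/-- push `mul` through a finite sum in the second argument. -/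
lemma mul_finsum {ι : Type*} (s : Finset ι) {A : Coeffs N} {F : ι → Coeffs N} {a d : ℤ}
    (hA : degLe A a) (hF : ∀ i ∈ s, degLe (F i) d) (n : ℤ) (x : Fin N → ℝ) :
    mul A (fun m y => ∑ i ∈ s, F i m y) n x = ∑ i ∈ s, mul A (F i) n x := by
  classical
  induction s using Finset.induction with
  | empty =>
      simp only [Finset.sum_empty]
      show ∑' i : ℤ, A i x * 0 = 0
      simp
  | insert j s hnot ih =>
      have h1 : mul A (fun m y => ∑ i ∈ insert j s, F i m y) n x
          = mul A (fun m y => F j m y + ∑ i ∈ s, F i m y) n x := by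
        congr 1
        funext m y
        rw [Finset.sum_insert hnot]
      rw [h1, mul_add_fn hA (hF j (Finset.mem_insert_self j s))
        (degLe_finsum s (fun i hi => hF i (Finset.mem_insert_of_mem hi))) n x,
        ih (fun i hi => hF i (Finset.mem_insert_of_mem hi)), Finset.sum_insert hnot]

/-- push `mul` through a `ℕ`-indexed tsum of series with decaying degrees. -/
lemma mul_tsum_nat {A : Coeffs N} {F : ℕ → Coeffs N} {a : ℤ}
    (hA : degLe A a) (hF : ∀ i : ℕ, degLe (F i) (-(i : ℤ) - 1)) (n : ℤ) (x : Fin N → ℝ) :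
    mul A (fun m y => ∑' i : ℕ, F i m y) n x = ∑' i : ℕ, mul A (F i) n x := by
  set s : Finset ℤ := Finset.Icc (n + 1) a with hs
  have inner_bound : ∀ (j : ℤ), n - j > -1 → (∑' i : ℕ, F i (n - j) x) = 0 := by
    intro j hj
    have : ∀ i : ℕ, F i (n - j) x = 0 := by
      intro i
      rw [hF i (n - j) (by omega)]
      rfl
    rw [tsum_congr this]
    simp
  have e1 : mul A (fun m y => ∑' i : ℕ, F i m y) n x
      = ∑ j ∈ s, A j x * ∑' i : ℕ, F i (n - j) x := by
    apply tsum_eq_sum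
    intro j hj
    rw [hs, Finset.mem_Icc] at hj
    push_neg at hj
    by_cases h : j ≤ a
    · show A j x * (∑' i : ℕ, F i (n - j) x) = 0
      rw [inner_bound j (by omega)]
      simp
    · rw [hA j (by omega)]
      simp
  have e2 : ∀ j ∈ s, A j x * ∑' i : ℕ, F i (n - j) x
      = ∑' i : ℕ, A j x * F i (n - j) x := fun j _ => (tsum_mul_left).symm
  have e3 : ∑ j ∈ s, ∑' i : ℕ, A j x * F i (n - j) x
      = ∑' i : ℕ, ∑ j ∈ s, A j x * F i (n - j) x := by
    rw [← Summable.tsum_finsetSum]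
    intro j hj
    rw [hs, Finset.mem_Icc] at hj
    apply summable_of_ne_finset_zero (s := Finset.range ((j - n).toNat))
    intro i hi
    rw [Finset.mem_range] at hi
    have : -(i : ℤ) - 1 < n - j := by omega
    rw [hF i (n - j) this]
    simp
  have e4 : ∀ i : ℕ, ∑ j ∈ s, A j x * F i (n - j) x = mul A (F i) n x := by
    intro i
    symm
    apply tsum_eq_sum
    intro j hj
    rw [hs, Finset.mem_Icc] at hj
    push_neg at hj
    by_cases h : j ≤ a
    · rw [hF i (n - j) (by omega)]
      simp
    · rw [hA j (by omega)]
      simp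
  rw [e1, Finset.sum_congr rfl e2, e3, tsum_congr e4]
/-- `Σ_q q(q+1) T_{q+1} μ^{q-1} ⋅ D` -type sums. -/
noncomputable def UU (mu D : Coeffs N) : Coeffs N :=
  fun m x => ∑ q : Fin N,
    ((((q : ℕ) + 1 : ℕ) : ℝ) * x q * ((q : ℕ) : ℝ)) * mul (powC mu ((q : ℕ) - 1)) D m x

/-- `Σ_i (S_i)_X μ^{-i}` -type sums. -/
noncomputable def VV [NeZero N] (muinv : Coeffs N) (S : ℕ → (Fin N → ℝ) → ℝ) : Coeffs N :=
  fun m x => ∑' i : ℕ, pd 0 (S (i + 1)) x * powC muinv (i + 1) m x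

/-- `Σ_i (i+1) S_{i+1} μ^{-(i+2)} ⋅ D` -type sums. -/
noncomputable def WW (muinv : Coeffs N) (S : ℕ → (Fin N → ℝ) → ℝ) (D : Coeffs N) :
    Coeffs N :=
  fun m x => ∑' i : ℕ, (S (i + 1) x * ((i : ℝ) + 1)) * mul (powC muinv (i + 2)) D m x

section Main

variable [NeZero N] {mu muinv : Coeffs N} (hmu : IsLaurent mu) (hshape : IsDMKPShape mu)
  (hmuinv : IsLaurent muinv) (hinv : mul mu muinv = one') (hinv' : mul muinv mu = one')
  {S : ℕ → (Fin N → ℝ) → ℝ} (hS : ∀ i : ℕ, ContDiff ℝ (⊤ : ℕ∞) (S i))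

include hshape hmuinv hinv in
lemma Mcoef (m : ℤ) (y : Fin N → ℝ) :
    orlov mu muinv S m y
      = (∑ q : Fin N, (((q : ℕ) + 1 : ℕ) : ℝ) * y q * powC mu (q : ℕ) m y)
        + ∑ i ∈ Finset.range ((-m).toNat), S (i + 1) y * powC muinv (i + 1) m y := by
  have hdinv : degLe muinv (-1) := degLe_muinv hshape hmuinv hinv
  show _ + ∑' i : ℕ, S (i + 1) y * powC muinv (i + 1) m y = _
  congr 1
  apply tsum_eq_sum
  intro i hi
  rw [Finset.mem_range] at hi
  have h1 : ((i : ℤ) + 1) * (-1) < m := by omega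
  rw [show ((i : ℕ) + 1 : ℕ) = i + 1 from rfl]
  have h2 : powC muinv (i + 1) m = 0 := degLe_powC hdinv (i + 1) m (by push_cast; omega)
  rw [h2]
  simp

lemma diff_coord (q : Fin N) (x : Fin N → ℝ) :
    DifferentiableAt ℝ (fun y : Fin N → ℝ => y q) x :=
  (ContinuousLinearMap.proj q : (Fin N → ℝ) →L[ℝ] ℝ).differentiable.differentiableAt

include hmu hshape hmuinv hinv hinv' hS in
lemma dTM_formula :
    dT 0 (orlov mu muinv S)
      = fun m x => one' m x + (UU mu (dT 0 mu) m x
          + (VV muinv S m x + -(WW muinv S (dT 0 mu) m x))) := by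
  have hdmu : degLe mu 1 := degLe_mu hshape
  have hdinv : degLe muinv (-1) := degLe_muinv hshape hmuinv hinv
  funext m x
  have hM : orlov mu muinv S m
      = fun y => (∑ q : Fin N, (((q : ℕ) + 1 : ℕ) : ℝ) * y q * powC mu (q : ℕ) m y)
        + ∑ i ∈ Finset.range ((-m).toNat), S (i + 1) y * powC muinv (i + 1) m y :=
    funext fun y => Mcoef hshape hmuinv hinv m y
  have hPdiff : ∀ (k : ℕ) (j : ℤ), DifferentiableAt ℝ (powC mu k j) x := fun k j =>
    ((smooth_powC hdmu hmu.2 k j).differentiable (by simp)) x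
  have hQdiff : ∀ (k : ℕ) (j : ℤ), DifferentiableAt ℝ (powC muinv k j) x := fun k j =>
    ((smooth_powC hdinv hmuinv.2 k j).differentiable (by simp)) x
  have hqterm : ∀ q : Fin N, DifferentiableAt ℝ
      (fun y => (((q : ℕ) + 1 : ℕ) : ℝ) * y q * powC mu (q : ℕ) m y) x := fun q =>
    (((differentiableAt_const _).mul (diff_coord q x)).mul (hPdiff (q : ℕ) m))
  have hiterm : ∀ i : ℕ, DifferentiableAt ℝ
      (fun y => S (i + 1) y * powC muinv (i + 1) m y) x := fun i =>
    ((( hS (i + 1)).differentiable (by simp)) x).mul (hQdiff (i + 1) m)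
  have hF : DifferentiableAt ℝ
      (fun y => ∑ q : Fin N, (((q : ℕ) + 1 : ℕ) : ℝ) * y q * powC mu (q : ℕ) m y) x :=
    DifferentiableAt.fun_sum (fun q _ => hqterm q)
  have hG : DifferentiableAt ℝ
      (fun y => ∑ i ∈ Finset.range ((-m).toNat), S (i + 1) y * powC muinv (i + 1) m y) x :=
    DifferentiableAt.fun_sum (fun i _ => hiterm i)
  show pd 0 (orlov mu muinv S m) x = _
  rw [hM, pd_add 0 x hF hG, pd_finsum 0 _ _ x (fun q _ => hqterm q),
    pd_finsum 0 _ _ x (fun i _ => hiterm i)]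
  -- q-terms
  have eq1 : ∀ q : Fin N,
      pd 0 (fun y => (((q : ℕ) + 1 : ℕ) : ℝ) * y q * powC mu (q : ℕ) m y) x
        = ((((q : ℕ) + 1 : ℕ) : ℝ) * (if (0 : Fin N) = q then 1 else 0)) * powC mu (q : ℕ) m x
          + ((((q : ℕ) + 1 : ℕ) : ℝ) * x q * ((q : ℕ) : ℝ))
              * mul (powC mu ((q : ℕ) - 1)) (dT 0 mu) m x := by
    intro q
    rw [pd_mul 0 (f := fun y => (((q : ℕ) + 1 : ℕ) : ℝ) * y q) x ((differentiableAt_const _).mul (diff_coord q x)) (hPdiff (q : ℕ) m)]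
    have e1 : pd 0 (fun y => (((q : ℕ) + 1 : ℕ) : ℝ) * y q) x
        = (((q : ℕ) + 1 : ℕ) : ℝ) * (if (0 : Fin N) = q then 1 else 0) := by
      rw [pd_const_mul 0 _ x (diff_coord q x), pd_coord]
    have e2 : pd 0 (powC mu (q : ℕ) m) x
        = ((q : ℕ) : ℝ) * mul (powC mu ((q : ℕ) - 1)) (dT 0 mu) m x := by
      have := congrFun (congrFun (dT_powC' 0 hdmu hmu.2 (q : ℕ)) m) x
      exact this
    rw [e1, e2]
    ring
  rw [Finset.sum_congr rfl (fun q _ => eq1 q), Finset.sum_add_distrib]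
  -- the delta part sums to one'
  have eq2 : ∑ q : Fin N,
      ((((q : ℕ) + 1 : ℕ) : ℝ) * (if (0 : Fin N) = q then 1 else 0)) * powC mu (q : ℕ) m x
      = one' m x := by
    rw [Finset.sum_eq_single (0 : Fin N)]
    · have h0 : ((0 : Fin N) : ℕ) = 0 := by simp
      rw [if_pos rfl, h0]
      show ((1:ℕ):ℝ) * 1 * one' m x = one' m x
      norm_num
    · intro q _ hq
      rw [if_neg (fun h => hq h.symm)]
      ring
    · intro h
      exact absurd (Finset.mem_univ _) h
  rw [eq2]
  -- i-terms
  have eq3 : ∀ i : ℕ,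
      pd 0 (fun y => S (i + 1) y * powC muinv (i + 1) m y) x
        = pd 0 (S (i + 1)) x * powC muinv (i + 1) m x
          + -((S (i + 1) x * ((i : ℝ) + 1)) * mul (powC muinv (i + 2)) (dT 0 mu) m x) := by
    intro i
    rw [pd_mul 0 x (((hS (i + 1)).differentiable (by simp)) x) (hQdiff (i + 1) m)]
    have e2 : pd 0 (powC muinv (i + 1) m) x
        = -(((i : ℝ) + 1) * mul (powC muinv (i + 2)) (dT 0 mu) m x) := by
      have := congrFun (congrFun
        (dT_powC_muinv hmu hshape hmuinv hinv hinv' 0 i) m) x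
      exact this
    rw [e2]
    ring
  rw [Finset.sum_congr rfl (fun i _ => eq3 i), Finset.sum_add_distrib]
  -- convert the two range-sums into tsums
  have eq4 : ∑ i ∈ Finset.range ((-m).toNat), pd 0 (S (i + 1)) x * powC muinv (i + 1) m x
      = VV muinv S m x := by
    symm
    show (∑' i : ℕ, pd 0 (S (i + 1)) x * powC muinv (i + 1) m x) = _
    apply tsum_eq_sum
    intro i hi
    rw [Finset.mem_range] at hi
    have h2 : powC muinv (i + 1) m = 0 := degLe_powC hdinv (i + 1) m (by push_cast; omega)
    rw [h2]
    simp
  have eq5 : ∑ i ∈ Finset.range ((-m).toNat),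
      -((S (i + 1) x * ((i : ℝ) + 1)) * mul (powC muinv (i + 2)) (dT 0 mu) m x)
      = -(WW muinv S (dT 0 mu) m x) := by
    rw [Finset.sum_neg_distrib]
    congr 1
    symm
    show (∑' i : ℕ, (S (i + 1) x * ((i : ℝ) + 1)) * mul (powC muinv (i + 2)) (dT 0 mu) m x) = _
    apply tsum_eq_sum
    intro i hi
    rw [Finset.mem_range] at hi
    have hD : degLe (dT 0 mu) 1 := degLe_dT 0 hdmu
    have h2 : mul (powC muinv (i + 2)) (dT 0 mu) m = 0 := by
      apply degLe_mul (degLe_powC hdinv (i + 2)) hD m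
      push_cast
      omega
    rw [h2]
    simp
  rw [eq4, eq5]
  show one' m x + UU mu (dT 0 mu) m x + (VV muinv S m x + -(WW muinv S (dT 0 mu) m x)) = _
  ring
end Main
lemma degLe_neg_fn {E : Coeffs N} {e : ℤ} (hE : degLe E e) :
    degLe (fun m y => -(E m y)) e := by
  intro m hm
  funext y
  show -(E m y) = 0
  rw [hE m hm]
  simp

lemma degLe_add_fn {B C : Coeffs N} {b c : ℤ} (hB : degLe B b) (hC : degLe C c) :
    degLe (fun m y => B m y + C m y) (max b c) := by
  intro m hm
  funext y
  show B m y + C m y = 0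
  rw [hB m (by omega), hC m (by omega)]
  simp

lemma mul_expand2 {A B E : Coeffs N} {a b e : ℤ} (hA : degLe A a) (hB : degLe B b)
    (hE : degLe E e) (n : ℤ) (x : Fin N → ℝ) :
    mul A (fun m y => B m y + -(E m y)) n x = mul A B n x + -(mul A E n x) := by
  rw [mul_add_fn hA hB (degLe_neg_fn hE) n x, mul_neg_fn]

lemma mul_expand4 {A B C D E : Coeffs N} {a b c d e : ℤ} (hA : degLe A a) (hB : degLe B b)
    (hC : degLe C c) (hD : degLe D d) (hE : degLe E e) (n : ℤ) (x : Fin N → ℝ) :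
    mul A (fun m y => B m y + (C m y + (D m y + -(E m y)))) n x
      = mul A B n x + (mul A C n x + (mul A D n x + -(mul A E n x))) := by
  rw [mul_add_fn hA hB (degLe_add_fn hC (degLe_add_fn hD (degLe_neg_fn hE))) n x,
    mul_add_fn hA hC (degLe_add_fn hD (degLe_neg_fn hE)) n x,
    mul_expand2 hA hD hE n x]

section Main2

variable [NeZero N] {mu muinv : Coeffs N} (hmu : IsLaurent mu) (hshape : IsDMKPShape mu)
  (hmuinv : IsLaurent muinv) (hinv : mul mu muinv = one') (hinv' : mul muinv mu = one')
  {S : ℕ → (Fin N → ℝ) → ℝ} (hS : ∀ i : ℕ, ContDiff ℝ (⊤ : ℕ∞) (S i))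

include hshape in
lemma degLe_dXmu (q : Fin N) : degLe (dT q mu) 0 := by
  intro m hm
  by_cases h : m = 1
  · subst h
    funext x
    show pd q (mu 1) x = 0
    rw [hshape.1]
    exact pd_const q 1 x
  · have : mu m = 0 := hshape.2 m (by omega)
    funext x
    show pd q (mu m) x = 0
    rw [this]
    exact pd_zero' q x

include hshape in
lemma degLe_dPmu : degLe (dP mu) 0 := by
  have h := degLe_dP (degLe_mu hshape)
  exact degLe_mono (by norm_num) h

include hshape in
lemma dPmu_coeff {n : ℤ} (hn : 0 ≤ n) : dP mu n = one' n := by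
  by_cases h : n = 0
  · subst h
    funext x
    show ((0 + 1 : ℤ) : ℝ) * mu (0 + 1) x = one' 0 x
    rw [show (0 + 1 : ℤ) = 1 from rfl, hshape.1]
    simp [one']
  · funext x
    show ((n + 1 : ℤ) : ℝ) * mu (n + 1) x = one' n x
    rw [hshape.2 (n + 1) (by omega)]
    simp [one', h]

include hmu hshape hmuinv hinv hinv' in
lemma dPM_formula :
    dP (orlov mu muinv S)
      = fun m x => UU mu (dP mu) m x + -(WW muinv S (dP mu) m x) := by
  have hdmu : degLe mu 1 := degLe_mu hshape
  have hdinv : degLe muinv (-1) := degLe_muinv hshape hmuinv hinv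
  funext m x
  show ((m + 1 : ℤ) : ℝ) * orlov mu muinv S (m + 1) x = _
  rw [Mcoef hshape hmuinv hinv (m + 1) x, mul_add, Finset.mul_sum, Finset.mul_sum]
  have eq1 : ∀ q : Fin N,
      ((m + 1 : ℤ) : ℝ) * ((((q : ℕ) + 1 : ℕ) : ℝ) * x q * powC mu (q : ℕ) (m + 1) x)
        = ((((q : ℕ) + 1 : ℕ) : ℝ) * x q * ((q : ℕ) : ℝ))
            * mul (powC mu ((q : ℕ) - 1)) (dP mu) m x := by
    intro q
    have e' : ((m + 1 : ℤ) : ℝ) * powC mu (q : ℕ) (m + 1) x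
        = ((q : ℕ) : ℝ) * mul (powC mu ((q : ℕ) - 1)) (dP mu) m x :=
      congrFun (congrFun (dP_powC' hdmu (q : ℕ)) m) x
    linear_combination ((((q : ℕ) + 1 : ℕ) : ℝ) * x q) * e'
  have eq2 : ∀ i : ℕ,
      ((m + 1 : ℤ) : ℝ) * (S (i + 1) x * powC muinv (i + 1) (m + 1) x)
        = -((S (i + 1) x * ((i : ℝ) + 1)) * mul (powC muinv (i + 2)) (dP mu) m x) := by
    intro i
    have e' : ((m + 1 : ℤ) : ℝ) * powC muinv (i + 1) (m + 1) x
        = -(((i : ℝ) + 1) * mul (powC muinv (i + 2)) (dP mu) m x) :=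
      congrFun (congrFun (dP_powC_muinv hmu hshape hmuinv hinv hinv' i) m) x
    linear_combination S (i + 1) x * e'
  rw [Finset.sum_congr rfl (fun q _ => eq1 q), Finset.sum_congr rfl (fun i _ => eq2 i)]
  congr 1
  rw [Finset.sum_neg_distrib]
  congr 1
  symm
  show (∑' i : ℕ, (S (i + 1) x * ((i : ℝ) + 1)) * mul (powC muinv (i + 2)) (dP mu) m x) = _
  apply tsum_eq_sum
  intro i hi
  rw [Finset.mem_range] at hi
  have h2 : mul (powC muinv (i + 2)) (dP mu) m = 0 := by
    apply degLe_mul (degLe_powC hdinv (i + 2)) (degLe_dPmu hshape) m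
    push_cast
    omega
  rw [h2]
  simp

end Main2
theorem statement17' {N : ℕ} [NeZero N] (mu muinv : Coeffs N)
    (hmu : IsLaurent mu) (hshape : IsDMKPShape mu)
    (hmuinv : IsLaurent muinv) (hinv : mul mu muinv = one') (hinv' : mul muinv mu = one')
    (S : ℕ → (Fin N → ℝ) → ℝ) (hS : ∀ i : ℕ, ContDiff ℝ (⊤ : ℕ∞) (S i))
    (M : Coeffs N) (hM : M = orlov mu muinv S) :
    ∀ n : ℤ, 0 ≤ n → pb mu M n = one' n := by
  have hdmu : degLe mu 1 := degLe_mu hshape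
  have hdinv : degLe muinv (-1) := degLe_muinv hshape hmuinv hinv
  have hDX : degLe (dT (0 : Fin N) mu) 0 := degLe_dXmu hshape 0
  have hDP : degLe (dP mu) 0 := degLe_dPmu hshape
  have hFdeg : ∀ (D : Coeffs N), degLe D 0 → ∀ q : Fin N,
      degLe (fun m (y : Fin N → ℝ) => ((((q : ℕ) + 1 : ℕ) : ℝ) * y q * ((q : ℕ) : ℝ))
        * mul (powC mu ((q : ℕ) - 1)) D m y) (N : ℤ) := by
    intro D hD q m hm
    funext y
    show _ * mul (powC mu ((q : ℕ) - 1)) D m y = 0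
    have h2 : mul (powC mu ((q : ℕ) - 1)) D m = 0 := by
      apply degLe_mul (degLe_powC hdmu _) hD m
      have h3 : (((q : ℕ) - 1 : ℕ) : ℤ) ≤ ((q : ℕ) : ℤ) := by exact_mod_cast Nat.sub_le _ _
      have h4 : ((q : ℕ) : ℤ) < (N : ℤ) := by exact_mod_cast q.isLt
      omega
    rw [h2]
    simp
  have hGdeg : ∀ (D : Coeffs N), degLe D 0 → ∀ i : ℕ,
      degLe (fun m (y : Fin N → ℝ) => (S (i + 1) y * ((i : ℝ) + 1))
        * mul (powC muinv (i + 2)) D m y) (-(i : ℤ) - 1) := by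
    intro D hD i m hm
    funext y
    show _ * mul (powC muinv (i + 2)) D m y = 0
    have h2 : mul (powC muinv (i + 2)) D m = 0 := by
      apply degLe_mul (degLe_powC hdinv _) hD m
      push_cast
      omega
    rw [h2]
    simp
  have hUdeg : ∀ (D : Coeffs N), degLe D 0 → degLe (UU mu D) (N : ℤ) := by
    intro D hD
    exact degLe_finsum Finset.univ (fun q _ => hFdeg D hD q)
  have hWdeg : ∀ (D : Coeffs N), degLe D 0 → degLe (WW muinv S D) (-1) := by
    intro D hD
    exact degLe_tsum_nat (fun i => degLe_mono (by omega) (hGdeg D hD i))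
  have hVdeg : degLe (VV muinv S) (-1) := by
    apply degLe_tsum_nat (F := fun i => fun m y => pd 0 (S (i + 1)) y * powC muinv (i + 1) m y)
    intro i m hm
    funext y
    show pd 0 (S (i + 1)) y * powC muinv (i + 1) m y = 0
    rw [degLe_powC hdinv (i + 1) m (by push_cast; omega)]
    simp
  subst hM
  intro n hn
  funext x
  show mul (dP mu) (dT 0 (orlov mu muinv S)) n x
      - mul (dT 0 mu) (dP (orlov mu muinv S)) n x = one' n x
  rw [dTM_formula hmu hshape hmuinv hinv hinv' hS, dPM_formula hmu hshape hmuinv hinv hinv',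
    mul_expand4 hDP degLe_one' (hUdeg _ hDX) hVdeg (hWdeg _ hDX) n x,
    mul_expand2 hDX (hUdeg _ hDP) (hWdeg _ hDP) n x]
  have hone : mul (dP mu) one' n x = one' n x := by
    rw [mul_one']
    exact congrFun (dPmu_coeff hshape hn) x
  have hV : mul (dP mu) (VV muinv S) n x = 0 := by
    have h := degLe_mul hDP hVdeg n (by omega)
    exact congrFun h x
  have hU : mul (dP mu) (UU mu (dT 0 mu)) n x = mul (dT 0 mu) (UU mu (dP mu)) n x := by
    calc mul (dP mu) (UU mu (dT 0 mu)) n x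
        = ∑ q : Fin N, mul (dP mu) (fun m (y : Fin N → ℝ) =>
            ((((q : ℕ) + 1 : ℕ) : ℝ) * y q * ((q : ℕ) : ℝ))
              * mul (powC mu ((q : ℕ) - 1)) (dT 0 mu) m y) n x :=
          mul_finsum Finset.univ hDP (fun q _ => hFdeg _ hDX q) n x
      _ = ∑ q : Fin N, mul (dT 0 mu) (fun m (y : Fin N → ℝ) =>
            ((((q : ℕ) + 1 : ℕ) : ℝ) * y q * ((q : ℕ) : ℝ))
              * mul (powC mu ((q : ℕ) - 1)) (dP mu) m y) n x := by
          apply Finset.sum_congr rfl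
          intro q _
          rw [mul_smul_fn (dP mu) (mul (powC mu ((q : ℕ) - 1)) (dT 0 mu)) _ n x,
            mul_smul_fn (dT 0 mu) (mul (powC mu ((q : ℕ) - 1)) (dP mu)) _ n x,
            symm3 hDP (degLe_powC hdmu ((q : ℕ) - 1)) hDX]
      _ = mul (dT 0 mu) (UU mu (dP mu)) n x :=
          (mul_finsum Finset.univ hDX (fun q _ => hFdeg _ hDP q) n x).symm
  have hW : mul (dP mu) (WW muinv S (dT 0 mu)) n x
      = mul (dT 0 mu) (WW muinv S (dP mu)) n x := by
    calc mul (dP mu) (WW muinv S (dT 0 mu)) n x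
        = ∑' i : ℕ, mul (dP mu) (fun m (y : Fin N → ℝ) =>
            (S (i + 1) y * ((i : ℝ) + 1)) * mul (powC muinv (i + 2)) (dT 0 mu) m y) n x :=
          mul_tsum_nat hDP (hGdeg _ hDX) n x
      _ = ∑' i : ℕ, mul (dT 0 mu) (fun m (y : Fin N → ℝ) =>
            (S (i + 1) y * ((i : ℝ) + 1)) * mul (powC muinv (i + 2)) (dP mu) m y) n x := by
          apply tsum_congr
          intro i
          rw [mul_smul_fn (dP mu) (mul (powC muinv (i + 2)) (dT 0 mu)) _ n x,
            mul_smul_fn (dT 0 mu) (mul (powC muinv (i + 2)) (dP mu)) _ n x,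
            symm3 hDP (degLe_powC hdinv (i + 2)) hDX]
      _ = mul (dT 0 mu) (WW muinv S (dP mu)) n x :=
          (mul_tsum_nat hDX (hGdeg _ hDP) n x).symm
  rw [hone, hV, hU, hW]
  ring
/-- for the Orlov function `M` of dmKP, `{μ,M} - 1` contains only strictly
negative powers of `P`, i.e. `({μ,M} - 1)_{≥0} = 0`. -/
theorem statement17 {N : ℕ} [NeZero N] (mu muinv : Coeffs N)
    (hmu : IsLaurent mu) (hshape : IsDMKPShape mu)
    (hmuinv : IsLaurent muinv) (hinv : mul mu muinv = one') (hinv' : mul muinv mu = one')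
    (S : ℕ → (Fin N → ℝ) → ℝ) (hS : ∀ i : ℕ, ContDiff ℝ (⊤ : ℕ∞) (S i))
    (M : Coeffs N) (hM : M = orlov mu muinv S) :
    ∀ n : ℤ, 0 ≤ n → pb mu M n = one' n := by
  exact statement17' mu muinv hmu hshape hmuinv hinv hinv' S hS M hM

end DMKP
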